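/- Let α = (√5 - 1)/2 and let β be the unique real number in (0,1) with 1 - β - β² + β³ - β⁴ = 0. Let n ≥ 0 be a natural number and suppose α^(2^(-n)) < q < β^(2^(-n)). Then t_N · S_N(q) < 0 for all N with 1 ≤ N < 5·2^n, while t_M · S_M(q) > 0 for M = 5·2^n. -/
import Mathlib


/-- The Thue-Morse sequence: `tm n = (-1)^(s₂ n)` where `s₂ n` is the sum of the
binary digits of `n`. -/
def tm (n : ℕ) : ℤ := (-1) ^ (Nat.digits 2 n).sum

/-- The partial sums `S q n = ∑_{0 ≤ j < n} tm j * q^j`. -/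
noncomputable def S (q : ℝ) (n : ℕ) : ℝ := ∑ j ∈ Finset.range n, (tm j : ℝ) * q ^ j

lemma S_succ (q : ℝ) (n : ℕ) : S q (n + 1) = S q n + (tm n : ℝ) * q ^ n :=
  Finset.sum_range_succ _ _

lemma tm_even (n : ℕ) : tm (2 * n) = tm n := by
  rcases Nat.eq_zero_or_pos n with rfl | hn
  · rfl
  · unfold tm
    rw [Nat.digits_def' (by norm_num : 1 < 2) (by omega)]
    simp

lemma tm_odd (n : ℕ) : tm (2 * n + 1) = -tm n := by
  unfold tm
  rw [Nat.digits_def' (by norm_num : 1 < 2) (by omega)]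
  have h1 : (2 * n + 1) % 2 = 1 := by omega
  have h2 : (2 * n + 1) / 2 = n := by omega
  rw [h1, h2, List.sum_cons, pow_add]
  ring

lemma tm_mul_self (n : ℕ) : tm n * tm n = 1 := by
  unfold tm
  rw [← pow_add, ← two_mul, pow_mul]
  norm_num

lemma S_even (q : ℝ) (N : ℕ) : S q (2 * N) = (1 - q) * S (q ^ 2) N := by
  induction N with
  | zero => simp [S]
  | succ N ih =>
    have h2 : 2 * (N + 1) = 2 * N + 1 + 1 := by ring
    rw [h2, S_succ, S_succ, ih, S_succ, tm_odd, tm_even]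
    push_cast
    ring

lemma tm0 : tm 0 = 1 := by simp [tm]
lemma tm1 : tm 1 = -1 := by have := tm_odd 0; simpa [tm0] using this
lemma tm2 : tm 2 = -1 := by have := tm_even 1; simp [tm1] at this ⊢; omega
lemma tm3 : tm 3 = 1 := by have := tm_odd 1; rw [tm1] at this; norm_num at this ⊢; omega
lemma tm4 : tm 4 = -1 := by have := tm_even 2; rw [tm2] at this; norm_num at this; exact this
lemma tm5 : tm 5 = 1 := by have := tm_odd 2; rw [tm2] at this; norm_num at this; exact this

lemma S1 (q : ℝ) : S q 1 = 1 := by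
  rw [show (1:ℕ) = 0 + 1 from rfl, S_succ]
  simp [S, tm]

lemma base_case (q : ℝ) (hq0 : 0 < q) (hq1 : q < 1)
    (h1 : 1 < q + q ^ 2)
    (h5 : 0 < 1 - q - q ^ 2 + q ^ 3 - q ^ 4) :
    (∀ N : ℕ, 1 ≤ N → N < 5 →
        0 < -(tm N : ℝ) * S q N ∧ (1 - q) * (-(tm N : ℝ) * S q N) < q ^ N) ∧
      0 < (tm 5 : ℝ) * S q 5 := by
  have hhalf : 1 / 2 < q := by nlinarith
  have hS1 : S q 1 = 1 := S1 q
  have hS2 : S q 2 = 1 - q := by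
    rw [show (2 : ℕ) = 1 + 1 from rfl, S_succ, hS1, tm1]; push_cast; ring
  have hS3 : S q 3 = 1 - q - q ^ 2 := by
    rw [show (3 : ℕ) = 2 + 1 from rfl, S_succ, hS2, tm2]; push_cast; ring
  have hS4 : S q 4 = 1 - q - q ^ 2 + q ^ 3 := by
    rw [show (4 : ℕ) = 3 + 1 from rfl, S_succ, hS3, tm3]; push_cast; ring
  have hS5 : S q 5 = 1 - q - q ^ 2 + q ^ 3 - q ^ 4 := by
    rw [show (5 : ℕ) = 4 + 1 from rfl, S_succ, hS4, tm4]; push_cast; ring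
  refine ⟨?_, ?_⟩
  · intro N hN1 hN5
    interval_cases N
    · rw [hS1, tm1]; constructor
      · norm_num
      · push_cast; nlinarith
    · rw [hS2, tm2]; constructor
      · push_cast; nlinarith
      · push_cast; nlinarith
    · rw [hS3, tm3]; constructor
      · push_cast; nlinarith
      · push_cast; nlinarith [sq_nonneg (q - 3/5), sq_nonneg (2*q - 1)]
    · rw [hS4, tm4]; constructor
      · push_cast; nlinarith [sq_nonneg (1 - q)]
      · push_cast; nlinarith [sq_nonneg (q + q^2 - 1), mul_pos hq0 (sub_pos.2 hq1), sq_nonneg (1-q), mul_pos (mul_pos hq0 hq0) (sub_pos.2 hq1)]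
  · rw [hS5, tm5]; push_cast; nlinarith

lemma key : ∀ (n : ℕ) (q : ℝ), 0 < q → q < 1 →
    1 < q ^ 2 ^ n + (q ^ 2 ^ n) ^ 2 →
    0 < 1 - q ^ 2 ^ n - (q ^ 2 ^ n) ^ 2 + (q ^ 2 ^ n) ^ 3 - (q ^ 2 ^ n) ^ 4 →
    (∀ N : ℕ, 1 ≤ N → N < 5 * 2 ^ n →
        0 < -(tm N : ℝ) * S q N ∧ (1 - q) * (-(tm N : ℝ) * S q N) < q ^ N) ∧
      0 < (tm (5 * 2 ^ n) : ℝ) * S q (5 * 2 ^ n) := by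
  intro n
  induction n with
  | zero =>
    intro q hq0 hq1 h1 h5
    simp only [pow_zero, pow_one] at h1 h5
    simpa using base_case q hq0 hq1 h1 h5
  | succ n ih =>
    intro q hq0 hq1 h1 h5
    have hx0 : (0:ℝ) < q ^ 2 ^ (n + 1) := pow_pos hq0 _
    have hxq : q ^ 2 ^ (n + 1) ≤ q := by
      calc q ^ 2 ^ (n + 1) ≤ q ^ 1 := pow_le_pow_of_le_one hq0.le hq1.le (Nat.one_le_two_pow)
      _ = q := pow_one q
    have hqhalf : 1 / 2 < q := by nlinarith
    have hr0 : (0:ℝ) < q ^ 2 := by positivity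
    have hr1 : q ^ 2 < 1 := by nlinarith
    have hrx : (q ^ 2) ^ 2 ^ n = q ^ 2 ^ (n + 1) := by
      rw [← pow_mul, ← pow_succ']
    obtain ⟨IH1, IH2⟩ := ih (q ^ 2) hr0 hr1 (by rw [hrx]; exact h1) (by rw [hrx]; exact h5)
    constructor
    · intro N hN1 hN5
      rcases Nat.even_or_odd N with ⟨M, hM⟩ | ⟨M, hM⟩
      · -- even, N = M + M
        have hNM : N = 2 * M := by omega
        subst hNM
        have hM1 : 1 ≤ M := by omega
        have hM5 : M < 5 * 2 ^ n := by
          have : 2 * M < 5 * 2 ^ (n + 1) := hN5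
          rw [pow_succ] at this; omega
        obtain ⟨hA, hB⟩ := IH1 M hM1 hM5
        have hrM : (q ^ 2) ^ M = q ^ (2 * M) := by rw [← pow_mul]
        rw [hrM] at hB
        have hSN : S q (2 * M) = (1 - q) * S (q ^ 2) M := S_even q M
        have htm : (tm (2 * M) : ℝ) = (tm M : ℝ) := by rw [tm_even]
        rw [hSN, htm]
        constructor
        · have : 0 < 1 - q := by linarith
          nlinarith [hA]
        · nlinarith [hA, hB, mul_nonneg (mul_nonneg hq0.le (by linarith : (0:ℝ) ≤ 1 - q)) hA.le]
      · -- odd, N = 2 * M + 1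
        have hNM : N = 2 * M + 1 := hM
        subst hNM
        rcases Nat.eq_zero_or_pos M with rfl | hM1
        · rw [show 2 * 0 + 1 = 1 from rfl, S1, tm1]
          constructor
          · norm_num
          · push_cast; nlinarith
        · have hM5 : M < 5 * 2 ^ n := by
            have : 2 * M + 1 < 5 * 2 ^ (n + 1) := hN5
            rw [pow_succ] at this; omega
          obtain ⟨hA, hB⟩ := IH1 M hM1 hM5
          have hrM : (q ^ 2) ^ M = q ^ (2 * M) := by rw [← pow_mul]
          rw [hrM] at hB
          have hSN : S q (2 * M + 1) = (1 - q) * S (q ^ 2) M + (tm M : ℝ) * q ^ (2 * M) := by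
            rw [S_succ, S_even]
            have h' : (tm (2 * M) : ℝ) = (tm M : ℝ) := by rw [tm_even]
            rw [h']
          have htm : (tm (2 * M + 1) : ℝ) = -(tm M : ℝ) := by rw [tm_odd]; push_cast; ring
          have htms : (tm M : ℝ) * (tm M : ℝ) = 1 := by exact_mod_cast tm_mul_self M
          rw [hSN, htm]
          have key1 : -(-(tm M : ℝ)) * ((1 - q) * S (q ^ 2) M + (tm M : ℝ) * q ^ (2 * M))
              = q ^ (2 * M) - (1 - q) * (-(tm M : ℝ) * S (q ^ 2) M) := by
            linear_combination q ^ (2 * M) * htms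
          rw [key1]
          have hp : q ^ (2 * M + 1) = q ^ (2 * M) * q := pow_succ q (2 * M)
          constructor
          · nlinarith [hB, mul_nonneg (mul_nonneg hq0.le (by linarith : (0:ℝ) ≤ 1 - q)) hA.le]
          · rw [hp]
            nlinarith [pow_pos hq0 (2 * M), mul_nonneg (sq_nonneg (1 - q)) hA.le, hB,
              mul_nonneg (mul_nonneg hq0.le (by linarith : (0:ℝ) ≤ 1 - q)) hA.le]
    · have h52 : 5 * 2 ^ (n + 1) = 2 * (5 * 2 ^ n) := by ring
      rw [h52, S_even]
      have htm : (tm (2 * (5 * 2 ^ n)) : ℝ) = (tm (5 * 2 ^ n) : ℝ) := by rw [tm_even]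
      rw [htm]
      have he : (tm (5 * 2 ^ n) : ℝ) * ((1 - q) * S (q ^ 2) (5 * 2 ^ n))
          = (1 - q) * ((tm (5 * 2 ^ n) : ℝ) * S (q ^ 2) (5 * 2 ^ n)) := by ring
      rw [he]
      exact mul_pos (by linarith) IH2

lemma rpow_cancel (x : ℝ) (hx : 0 < x) (n : ℕ) :
    (x ^ ((2 : ℝ) ^ (-(n : ℤ)))) ^ (2 ^ n : ℕ) = x := by
  rw [← Real.rpow_natCast (x ^ ((2 : ℝ) ^ (-(n : ℤ)))) (2 ^ n), ← Real.rpow_mul hx.le]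
  have h : (2 : ℝ) ^ (-(n : ℤ)) * ((2 ^ n : ℕ) : ℝ) = 1 := by
    push_cast
    rw [zpow_neg, ← zpow_natCast (2:ℝ) n]
    field_simp
  rw [h, Real.rpow_one]

theorem main_sign_five (β : ℝ) (hβ0 : 0 < β) (hβ1 : β < 1)
    (hβ : 1 - β - β ^ 2 + β ^ 3 - β ^ 4 = 0)
    (n : ℕ) (q : ℝ)
    (hq0 : ((Real.sqrt 5 - 1) / 2) ^ ((2 : ℝ) ^ (-(n : ℤ))) < q)
    (hq1 : q < β ^ ((2 : ℝ) ^ (-(n : ℤ)))) :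
    (∀ N : ℕ, 1 ≤ N → N < 5 * 2 ^ n → (tm N : ℝ) * S q N < 0) ∧
      0 < (tm (5 * 2 ^ n) : ℝ) * S q (5 * 2 ^ n) := by
  have hs5 : Real.sqrt 5 ^ 2 = 5 := Real.sq_sqrt (by norm_num)
  have hs5' : (2:ℝ) < Real.sqrt 5 := by nlinarith [Real.sqrt_nonneg 5]
  have hα0 : (0:ℝ) < (Real.sqrt 5 - 1) / 2 := by linarith
  have hq0' : 0 < q := lt_trans (Real.rpow_pos_of_pos hα0 _) hq0
  have hA : (Real.sqrt 5 - 1) / 2 < q ^ 2 ^ n := by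
    calc (Real.sqrt 5 - 1) / 2
        = (((Real.sqrt 5 - 1) / 2) ^ ((2 : ℝ) ^ (-(n : ℤ)))) ^ (2 ^ n : ℕ) :=
          (rpow_cancel _ hα0 n).symm
      _ < q ^ 2 ^ n :=
          pow_lt_pow_left₀ hq0 (Real.rpow_pos_of_pos hα0 _).le (Nat.two_pow_pos n).ne'
  have hB : q ^ 2 ^ n < β := by
    calc q ^ 2 ^ n < (β ^ ((2 : ℝ) ^ (-(n : ℤ)))) ^ (2 ^ n : ℕ) :=
          pow_lt_pow_left₀ hq1 hq0'.le (Nat.two_pow_pos n).ne'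
      _ = β := rpow_cancel _ hβ0 n
  set x := q ^ 2 ^ n with hxdef
  have hx0 : 0 < x := pow_pos hq0' _
  have hx1 : x < 1 := lt_trans hB hβ1
  have h1 : 1 < x + x ^ 2 := by nlinarith [Real.sqrt_nonneg 5]
  have h5 : 0 < 1 - x - x ^ 2 + x ^ 3 - x ^ 4 := by
    have hbr : 0 < 1 + x + β - x ^ 2 - x * β - β ^ 2 + x ^ 3 + x ^ 2 * β + x * β ^ 2 + β ^ 3 := by
      nlinarith [mul_pos hx0 hβ0, mul_pos (mul_pos hx0 hx0) hβ0, mul_pos (mul_pos hβ0 hβ0) hx0]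
    nlinarith [mul_pos (sub_pos.2 hB) hbr]
  have hq1' : q < 1 := by
    by_contra h
    push_neg at h
    have hx : (1:ℝ) ≤ x := by rw [hxdef]; exact one_le_pow₀ h
    linarith
  obtain ⟨H1, H2⟩ := key n q hq0' hq1' h1 h5
  exact ⟨fun N hN1 hN5 => by have := (H1 N hN1 hN5).1; linarith, H2⟩
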